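/- Let k ≥ 1 be an integer and let z ∈ ℂ satisfy Re(z) ≥ 0 and z ≠ 0. Then |R̂_{k+1}(z)| ≤ η_k · (√π · Γ(k+1/2)/Γ(k)) · |T̂_k(z)|. -/

import Mathlib

open MeasureTheory Real Set

/-- The factor `η_k = 1 / (1 - 2 ^ (1 - 2k))`. -/
noncomputable def eta (k : ℕ) : ℝ := 1 / (1 - (2 : ℝ) ^ ((1 : ℤ) - 2 * k))

/-- The `j`-th term of Gauss's asymptotic series for `log Γ(z + 1/2)`. -/
noncomputable def That (j : ℕ) (z : ℂ) : ℂ :=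
  ((Polynomial.aeval ((1 : ℝ) / 2) (Polynomial.bernoulli (2 * j)) : ℝ) : ℂ) /
    ((2 * (j : ℂ)) * (2 * (j : ℂ) - 1) * z ^ (2 * j - 1))

/-- `Rhatnext k z` is the remainder `R̂_{k+1}(z)` after `k` terms of Gauss's series. -/
noncomputable def Rhatnext (k : ℕ) (z : ℂ) : ℂ :=
  -∫ u in Set.Ioi (0 : ℝ),
    ((Polynomial.aeval (Int.fract (u + 1 / 2)) (Polynomial.bernoulli (2 * k)) : ℝ) : ℂ) /
      ((2 * (k : ℂ)) * ((u : ℂ) + z) ^ (2 * k))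

/-- `Rhat k z` is the remainder `R̂_k(z)` after `k - 1` terms of Gauss's series. -/
noncomputable def Rhat (k : ℕ) (z : ℂ) : ℂ := That k z + Rhatnext k z

lemma integrableOn_J (k : ℕ) (hk : 1 ≤ k) :
    IntegrableOn (fun t : ℝ => (((1:ℝ) + t^2)^k)⁻¹) (Set.Ioi 0) := by
  apply Integrable.mono (integrable_inv_one_add_sq.integrableOn)
  · exact (Continuous.inv₀ (by continuity) (fun t => by positivity)).aestronglyMeasurable
  · filter_upwards with t
    have h1 : (0:ℝ) < 1 + t^2 := by positivity
    rw [norm_inv, norm_inv, Real.norm_eq_abs, Real.norm_eq_abs, abs_of_pos (pow_pos h1 k),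
      abs_of_pos h1]
    apply inv_anti₀ h1
    calc (1:ℝ) + t^2 = (1+t^2)^1 := (pow_one _).symm
    _ ≤ (1+t^2)^k := pow_le_pow_right₀ (by nlinarith) hk

lemma integrableOn_J2 (k : ℕ) :
    IntegrableOn (fun t : ℝ => t^2 * (((1:ℝ) + t^2)^(k+2))⁻¹) (Set.Ioi 0) := by
  apply Integrable.mono (integrableOn_J (k+1) (by omega))
  · exact (continuous_pow 2 |>.mul
      (Continuous.inv₀ (by continuity) (fun t => by positivity))).aestronglyMeasurable
  · filter_upwards with t
    have h1 : (0:ℝ) < 1 + t^2 := by positivity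
    have h2 : (0:ℝ) < (1+t^2)^(k+2) := pow_pos h1 _
    rw [Real.norm_eq_abs, Real.norm_eq_abs, abs_of_nonneg (by positivity),
      abs_of_pos (by positivity)]
    rw [← div_eq_mul_inv, ← one_div, div_le_div_iff₀ h2 (pow_pos h1 _), one_mul]
    calc t^2 * (1+t^2)^(k+1) ≤ (1+t^2) * (1+t^2)^(k+1) :=
          mul_le_mul_of_nonneg_right (by nlinarith) (by positivity)
    _ = (1+t^2)^(k+2) := by ring

lemma J_succ (k : ℕ) (hk : 1 ≤ k) :
    ∫ t in Set.Ioi (0:ℝ), (((1:ℝ) + t^2)^(k+1))⁻¹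
      = (2*(k:ℝ) - 1)/(2*k) * ∫ t in Set.Ioi (0:ℝ), (((1:ℝ) + t^2)^k)⁻¹ := by
  obtain ⟨m, rfl⟩ : ∃ m, k = m + 1 := ⟨k - 1, by omega⟩
  have hpos : ∀ t : ℝ, (0:ℝ) < 1 + t^2 := fun t => by positivity
  set F : ℝ → ℝ := fun t => t * ((1 + t^2)^(m+1))⁻¹ with hF
  set F' : ℝ → ℝ := fun t =>
    ((1+t^2)^(m+1))⁻¹ - 2*((m:ℝ)+1)*(t^2 * ((1+t^2)^(m+2))⁻¹) with hF'
  have hderiv : ∀ t ∈ Ici (0:ℝ), HasDerivAt F (F' t) t := by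
    intro t _
    have h1 : HasDerivAt (fun t : ℝ => 1 + t^2) (2*t) t := by
      simpa using ((hasDerivAt_pow 2 t).const_add 1)
    have h2 : HasDerivAt (fun t : ℝ => ((1 + t^2)^(m+1)))
        (((m:ℝ)+1)*(1+t^2)^m*(2*t)) t := by
      have := (hasDerivAt_pow (m+1) _).comp t h1
      simp only [Nat.cast_add, Nat.cast_one, add_tsub_cancel_right] at this
      exact this
    have h3 := (hasDerivAt_id t).mul (h2.inv (by positivity))
    refine h3.congr_deriv ?_
    have h0 := (hpos t).ne'
    show _ = ((1+t^2)^(m+1))⁻¹ - 2*((m:ℝ)+1)*(t^2 * ((1+t^2)^(m+2))⁻¹)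
    simp only [id, Pi.inv_apply, one_mul]
    field_simp
    ring
  have htend : Filter.Tendsto F Filter.atTop (nhds 0) := by
    have hb : ∀ᶠ t in Filter.atTop, F t ≤ t⁻¹ := by
      filter_upwards [Filter.eventually_ge_atTop (1:ℝ)] with t ht
      rw [hF]
      have h2 : t^2 ≤ (1+t^2)^(m+1) := by
        calc t^2 ≤ 1 + t^2 := by nlinarith
        _ = (1+t^2)^1 := (pow_one _).symm
        _ ≤ (1+t^2)^(m+1) := pow_le_pow_right₀ (by nlinarith) (by omega)
      have ht0 : (0:ℝ) < t := by linarith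
      calc t * ((1+t^2)^(m+1))⁻¹ ≤ t * (t^2)⁻¹ := by
            apply mul_le_mul_of_nonneg_left (inv_anti₀ (by positivity) h2) ht0.le
      _ = t⁻¹ := by field_simp
    have hb0 : ∀ᶠ t in Filter.atTop, 0 ≤ F t := by
      filter_upwards [Filter.eventually_ge_atTop (0:ℝ)] with t ht
      rw [hF]; positivity
    exact squeeze_zero' hb0 hb
      (tendsto_inv_atTop_zero : Filter.Tendsto (fun t : ℝ => t⁻¹) Filter.atTop (nhds 0))
  have hint1 : IntegrableOn (fun t : ℝ => (((1:ℝ)+t^2)^(m+1))⁻¹) (Ioi 0) :=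
    integrableOn_J (m+1) (by omega)
  have hint2 : IntegrableOn (fun t : ℝ => t^2 * (((1:ℝ)+t^2)^(m+2))⁻¹) (Ioi 0) :=
    integrableOn_J2 m
  have hintF' : IntegrableOn F' (Ioi 0) := by
    apply Integrable.sub hint1 (hint2.const_mul _)
  have key := integral_Ioi_of_hasDerivAt_of_tendsto' hderiv hintF' htend
  have hF0 : F 0 = 0 := by simp [hF]
  rw [hF0, sub_zero] at key
  -- key : ∫ F' = 0
  have hsplit : ∫ t in Ioi (0:ℝ), F' t
      = (∫ t in Ioi (0:ℝ), (((1:ℝ)+t^2)^(m+1))⁻¹)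
        - 2*((m:ℝ)+1) * ∫ t in Ioi (0:ℝ), t^2 * (((1:ℝ)+t^2)^(m+2))⁻¹ := by
    rw [integral_sub hint1 (hint2.const_mul _), integral_const_mul]
  -- pointwise: t^2 * ((1+t^2)^(m+2))⁻¹ = ((1+t^2)^(m+1))⁻¹ - ((1+t^2)^(m+2))⁻¹
  have hpt : ∀ t : ℝ, t^2 * (((1:ℝ)+t^2)^(m+2))⁻¹
      = (((1:ℝ)+t^2)^(m+1))⁻¹ - (((1:ℝ)+t^2)^(m+2))⁻¹ := by
    intro t
    have h0 := (hpos t).ne'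
    field_simp
    ring
  have hint3 : IntegrableOn (fun t : ℝ => (((1:ℝ)+t^2)^(m+2))⁻¹) (Ioi 0) :=
    integrableOn_J (m+2) (by omega)
  have hsplit2 : ∫ t in Ioi (0:ℝ), t^2 * (((1:ℝ)+t^2)^(m+2))⁻¹
      = (∫ t in Ioi (0:ℝ), (((1:ℝ)+t^2)^(m+1))⁻¹)
        - ∫ t in Ioi (0:ℝ), (((1:ℝ)+t^2)^(m+2))⁻¹ := by
    rw [← integral_sub hint1 hint3]
    exact setIntegral_congr_fun measurableSet_Ioi (fun t _ => hpt t)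
  rw [hsplit, hsplit2] at key
  have hm : (2*((m:ℝ)+1)) ≠ 0 := by positivity
  set A := ∫ t in Ioi (0:ℝ), (((1:ℝ)+t^2)^(m+1))⁻¹ with hA
  set B := ∫ t in Ioi (0:ℝ), (((1:ℝ)+t^2)^(m+2))⁻¹ with hB
  push_cast
  rw [div_mul_eq_mul_div, eq_div_iff hm]
  linear_combination key

lemma Jval (k : ℕ) (hk : 1 ≤ k) :
    ∫ t in Set.Ioi (0:ℝ), (((1:ℝ) + t^2)^k)⁻¹
      = Real.sqrt π * Real.Gamma ((k:ℝ) - 1/2) / (2 * Real.Gamma k) := by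
  induction k, hk using Nat.le_induction with
  | base =>
      simp only [pow_one, Nat.cast_one]
      rw [integral_Ioi_inv_one_add_sq, arctan_zero, sub_zero,
        show (1:ℝ) - 1/2 = 1/2 by norm_num, Real.Gamma_one_half_eq, Real.Gamma_one]
      have h := Real.mul_self_sqrt pi_nonneg
      rw [mul_one, h]
  | succ k hk ih =>
      rw [J_succ k hk, ih]
      have hk0 : (0:ℝ) < k := by exact_mod_cast hk
      have hG : Real.Gamma ((k:ℝ) + 1) = k * Real.Gamma k := by
        rw [Real.Gamma_add_one hk0.ne']
      have hG2 : Real.Gamma (((k:ℕ):ℝ) + 1 - 1/2) = ((k:ℝ) - 1/2) * Real.Gamma ((k:ℝ) - 1/2) := by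
        rw [show ((k:ℕ):ℝ) + 1 - 1/2 = ((k:ℝ) - 1/2) + 1 by ring,
          Real.Gamma_add_one (by intro h; have h1 : (1:ℝ) ≤ (k:ℝ) := (by exact_mod_cast hk); linarith)]
      push_cast
      rw [hG2, hG]
      have hGk : Real.Gamma (k:ℝ) ≠ 0 := (Real.Gamma_pos_of_pos hk0).ne'
      field_simp

lemma Jscale (k : ℕ) (hk : 1 ≤ k) {c : ℝ} (hc : 0 < c) :
    ∫ u in Set.Ioi (0:ℝ), ((u^2 + c^2)^k)⁻¹
      = (c^(2*k-1))⁻¹ * (Real.sqrt π * Real.Gamma ((k:ℝ) - 1/2) / (2 * Real.Gamma k)) := by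
  have h := integral_comp_mul_left_Ioi (fun u : ℝ => ((u^2 + c^2)^k)⁻¹) 0 hc
  rw [mul_zero] at h
  have h2 : ∀ x : ℝ, (((c*x)^2 + c^2)^k)⁻¹ = (c^(2*k))⁻¹ * (((1:ℝ) + x^2)^k)⁻¹ := by
    intro x
    rw [← mul_inv]
    congr 1
    rw [show (c*x)^2 + c^2 = c^2*(1+x^2) by ring, mul_pow, ← pow_mul]
  simp_rw [h2] at h
  rw [integral_const_mul, Jval k hk] at h
  have := congrArg (fun r => c * r) h
  simp only [smul_eq_mul, ← mul_assoc, mul_inv_cancel₀ hc.ne', one_mul] at this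
  rw [← this]
  have hpow : c * (c^(2*k))⁻¹ = (c^(2*k-1))⁻¹ := by
    rw [show 2*k = (2*k-1) + 1 by omega, pow_succ, mul_inv]
    field_simp
    congr 1
  rw [hpow]

lemma bernoulli_abs_le (k : ℕ) (hk : 1 ≤ k) {x : ℝ} (hx : x ∈ Set.Icc (0:ℝ) 1) :
    |((Polynomial.map (algebraMap ℚ ℝ) (Polynomial.bernoulli (2*k))).eval x)|
      ≤ eta k *
        |((Polynomial.map (algebraMap ℚ ℝ) (Polynomial.bernoulli (2*k))).eval (1/2 : ℝ))| := by
  set a : ℕ → ℝ := fun n => 1 / (n:ℝ)^(2*k) with ha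
  have hsumm : Summable a := summable_one_div_nat_pow.mpr (by omega)
  set S : ℝ := ∑' n, a n with hSdef
  have hS : HasSum a S := hsumm.hasSum
  have hS0 : 0 ≤ S := tsum_nonneg (fun n => by positivity)
  set C : ℝ := (-1 : ℝ) ^ (k + 1) * (2 * π) ^ (2 * k) / 2 / (Nat.factorial (2 * k) : ℝ) with hC
  set P := Polynomial.map (algebraMap ℚ ℝ) (Polynomial.bernoulli (2*k)) with hP
  have hCpos : 0 < |C| := by
    rw [hC, abs_div, abs_div, abs_mul, abs_pow, abs_pow, abs_neg, abs_one, one_pow, one_mul]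
    positivity
  -- sum at x
  have hsumx := hasSum_one_div_nat_pow_mul_cos (k := k) (by omega) hx
  -- |C * P.eval x| ≤ S
  have hboundx : |C * P.eval x| ≤ S := by
    rw [← hsumx.tsum_eq]
    have hsumm2 : Summable (fun n => a n * Real.cos (2 * π * n * x)) :=
      hsumm.of_norm_bounded_eventually_nat ?_
    · calc |∑' n, a n * Real.cos (2 * π * n * x)|
          ≤ ∑' n, |a n| * |Real.cos (2 * π * n * x)| := by
            simpa [Real.norm_eq_abs] using
              norm_tsum_le_tsum_norm (f := fun n => a n * Real.cos (2 * π * n * x))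
                (by simpa [Real.norm_eq_abs, abs_mul] using hsumm2.abs)
      _ ≤ ∑' n, a n := by
            apply Summable.tsum_le_tsum _ (by simpa [abs_mul] using hsumm2.abs) hsumm
            intro n
            calc |a n| * |Real.cos (2*π*n*x)| ≤ |a n| * 1 :=
                  mul_le_mul_of_nonneg_left (Real.abs_cos_le_one _) (abs_nonneg _)
            _ = a n := by rw [mul_one, abs_of_nonneg (by positivity)]
      _ = S := rfl
    · filter_upwards with n
      rw [norm_mul]
      calc ‖a n‖ * ‖Real.cos (2*π*n*x)‖ ≤ ‖a n‖ * 1 := by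
            apply mul_le_mul_of_nonneg_left _ (norm_nonneg _)
            rw [Real.norm_eq_abs]; exact Real.abs_cos_le_one _
      _ = a n := by rw [mul_one, Real.norm_eq_abs, abs_of_nonneg (by positivity)]
  -- sum at 1/2
  have hhalf : (1/2 : ℝ) ∈ Set.Icc (0:ℝ) 1 := by norm_num
  have hsumhalf := hasSum_one_div_nat_pow_mul_cos (k := k) (by omega) hhalf
  have hcos : ∀ n : ℕ, Real.cos (2 * π * n * (1/2)) = (-1 : ℝ)^n := by
    intro n
    have := Real.cos_add_int_mul_pi 0 (n : ℤ)
    simp only [zero_add, Real.cos_zero, mul_one] at this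
    rw [show 2 * π * n * (1/2) = (n:ℝ) * π by ring]
    rw [show ((n:ℤ):ℝ) = (n:ℝ) by push_cast; ring] at this
    rw [this, zpow_natCast]
  simp_rw [hcos] at hsumhalf
  -- even part
  have hinj : Function.Injective (fun m : ℕ => 2*m) := fun a b h => by dsimp at h; omega
  set q : ℝ := 2 * ((2:ℝ)^(2*k))⁻¹ with hqdef
  have hgeven : HasSum (fun n => a n + a n * (-1:ℝ)^n) (q * S) := by
    rw [← Function.Injective.hasSum_iff hinj ?_]
    · have h1 : HasSum (fun m => q * a m) (q * S) := hS.mul_left _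
      apply h1.congr_fun
      intro m
      show ((fun n => a n + a n * (-1:ℝ)^n) ∘ fun m => 2*m) m = q * a m
      simp only [Function.comp_apply]
      have he : ((-1:ℝ))^(2*m) = 1 := by rw [pow_mul, neg_one_sq, one_pow]
      rw [he, mul_one, ha, hqdef]
      simp only []
      rcases Nat.eq_zero_or_pos m with rfl | hm
      · simp [zero_pow (by omega : 2*k ≠ 0)]
      · have hm0 : (0:ℝ) < (m:ℝ) := by exact_mod_cast hm
        push_cast
        rw [mul_pow]
        field_simp
        ring
    · intro n hn
      have ho : Odd n := by
        rcases Nat.even_or_odd n with ⟨m, hm⟩ | ho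
        · exact absurd ⟨m, by simp; omega⟩ hn
        · exact ho
      rw [ho.neg_one_pow]; ring
  have hqpos : 0 < q := by rw [hqdef]; positivity
  have hqle : q ≤ 1/2 := by
    rw [hqdef]
    rw [show (1:ℝ)/2 = 2 * (4:ℝ)⁻¹ by norm_num]
    apply mul_le_mul_of_nonneg_left _ (by norm_num)
    apply inv_anti₀ (by norm_num)
    calc (4:ℝ) = 2^2 := by norm_num
    _ ≤ 2^(2*k) := pow_le_pow_right₀ one_le_two (by omega)
  have halt : HasSum (fun n => a n * (-1:ℝ)^n) (q * S - S) := by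
    have h2 := hgeven.sub hS
    simp only [add_sub_cancel_left] at h2
    exact h2
  have hval : C * P.eval (1/2 : ℝ) = q * S - S := hsumhalf.unique halt
  have hvalabs : |C| * |P.eval (1/2 : ℝ)| = (1 - q) * S := by
    rw [← abs_mul, hval, abs_sub_comm, abs_of_nonneg (by nlinarith)]
    ring
  rw [abs_mul] at hboundx
  have h1q : 0 < 1 - q := by linarith
  have hq' : (2:ℝ)^((1:ℤ) - 2*(k:ℕ)) = q := by
    rw [zpow_sub₀ (two_ne_zero), zpow_one, hqdef]
    norm_cast
  have goal1 : |P.eval x| ≤ S / |C| := by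
    rw [le_div_iff₀ hCpos]
    linarith [hboundx]
  calc |P.eval x| ≤ S / |C| := goal1
  _ = |P.eval (1/2 : ℝ)| / (1 - q) := by
      rw [div_eq_div_iff hCpos.ne' h1q.ne']
      linarith [hvalabs]
  _ = eta k * |P.eval (1/2 : ℝ)| := by
      rw [eta, hq']
      ring


lemma integrableOn_K (k : ℕ) (hk : 1 ≤ k) {c : ℝ} (hc : 0 < c) :
    IntegrableOn (fun u : ℝ => ((u^2 + c^2)^k)⁻¹) (Set.Ioi 0) := by
  set m : ℝ := min 1 (c^2) with hm
  have hm0 : 0 < m := lt_min one_pos (by positivity)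
  apply Integrable.mono ((integrableOn_J k hk).const_mul ((m^k)⁻¹))
  · exact (Continuous.inv₀ (by continuity) (fun u => by positivity)).aestronglyMeasurable
  · filter_upwards with u
    have h1 : (0:ℝ) < u^2 + c^2 := by positivity
    have h2 : (0:ℝ) < 1 + u^2 := by positivity
    rw [Real.norm_eq_abs, Real.norm_eq_abs, abs_of_pos (by positivity),
      abs_of_pos (by positivity)]
    have key : m^k * (1 + u^2)^k ≤ (u^2 + c^2)^k := by
      rw [← mul_pow]
      apply pow_le_pow_left₀ (by positivity)
      calc m * (1 + u^2) = m + m * u^2 := by ring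
      _ ≤ c^2 + 1 * u^2 := by
            apply add_le_add (min_le_right _ _)
            exact mul_le_mul_of_nonneg_right (min_le_left _ _) (by positivity)
      _ = u^2 + c^2 := by ring
    calc ((u^2 + c^2)^k)⁻¹ ≤ (m^k * (1 + u^2)^k)⁻¹ := inv_anti₀ (by positivity) key
    _ = (m^k)⁻¹ * ((1 + u^2)^k)⁻¹ := by rw [mul_inv]

theorem abs_Rhatnext_le_eta_gamma_ratio_mul (k : ℕ) (hk : 1 ≤ k) (z : ℂ)
    (hz : 0 ≤ z.re) (hz0 : z ≠ 0) :
    ‖Rhatnext k z‖ ≤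
      eta k * (Real.sqrt π * (Real.Gamma ((k : ℝ) + 1 / 2) / Real.Gamma k)) *
        ‖That k z‖ := by
  set c : ℝ := ‖z‖ with hc
  have hc0 : 0 < c := norm_pos_iff.mpr hz0
  have haeval : ∀ x : ℝ, (Polynomial.aeval x (Polynomial.bernoulli (2*k)) : ℝ)
      = (Polynomial.map (algebraMap ℚ ℝ) (Polynomial.bernoulli (2*k))).eval x := by
    intro x
    rw [Polynomial.aeval_def, Polynomial.eval_map]
  set B : ℝ := |(Polynomial.map (algebraMap ℚ ℝ) (Polynomial.bernoulli (2*k))).eval (1/2 : ℝ)|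
    with hB
  have hetapos : 0 < eta k := by
    rw [eta]
    apply div_pos one_pos
    have : (2:ℝ) ^ ((1:ℤ) - 2*(k:ℕ)) ≤ (2:ℝ) ^ (-1 : ℤ) :=
      zpow_le_zpow_right₀ one_le_two (by omega)
    simp only [zpow_neg, zpow_one] at this
    linarith
  have hk0 : (0:ℝ) < (k:ℝ) := by exact_mod_cast hk
  -- the dominating function
  set g : ℝ → ℝ := fun u => (eta k * B / (2*(k:ℝ))) * ((u^2 + c^2)^k)⁻¹ with hg
  have hgint : IntegrableOn g (Set.Ioi 0) := (integrableOn_K k hk hc0).const_mul _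
  -- pointwise bound
  have hbound : ∀ u : ℝ, u ∈ Set.Ioi (0:ℝ) →
      ‖(((Polynomial.aeval (Int.fract (u + 1/2)) (Polynomial.bernoulli (2*k)) : ℝ) : ℂ) /
        ((2 * (k:ℂ)) * ((u:ℂ) + z) ^ (2*k)))‖ ≤ g u := by
    intro u hu
    rw [Set.mem_Ioi] at hu
    have habs : ‖(((Polynomial.aeval (Int.fract (u + 1/2))
          (Polynomial.bernoulli (2*k)) : ℝ) : ℂ) / ((2 * (k:ℂ)) * ((u:ℂ) + z) ^ (2*k)))‖
        = |(Polynomial.aeval (Int.fract (u + 1/2)) (Polynomial.bernoulli (2*k)) : ℝ)| /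
          (2*(k:ℝ) * ‖((u:ℂ) + z)‖ ^ (2*k)) := by
      rw [norm_div, Complex.norm_real, Real.norm_eq_abs, norm_mul, norm_pow, norm_mul]
      simp [Complex.norm_natCast]
    rw [habs]
    have hfr : Int.fract (u + 1/2) ∈ Set.Icc (0:ℝ) 1 :=
      ⟨Int.fract_nonneg _, (Int.fract_lt_one _).le⟩
    have hnum : |(Polynomial.aeval (Int.fract (u + 1/2)) (Polynomial.bernoulli (2*k)) : ℝ)|
        ≤ eta k * B := by
      rw [haeval]
      exact bernoulli_abs_le k hk hfr
    have hden : (u^2 + c^2)^k ≤ ‖((u:ℂ) + z)‖ ^ (2*k) := by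
      rw [pow_mul]
      apply pow_le_pow_left₀ (by positivity)
      have hre : ((u:ℂ) + z).re = u + z.re := by simp
      have him : ((u:ℂ) + z).im = z.im := by simp
      have habs2 : ‖((u:ℂ)+z)‖^2 = (u + z.re)^2 + z.im^2 := by
        rw [Complex.sq_norm, Complex.normSq_apply, hre, him]; ring
      have hcz : c^2 = z.re^2 + z.im^2 := by
        rw [hc, Complex.sq_norm, Complex.normSq_apply]; ring
      rw [habs2, hcz]
      nlinarith [mul_nonneg hu.le hz]
    have hden0 : (0:ℝ) < (u^2 + c^2)^k := by positivity
    calc |(Polynomial.aeval (Int.fract (u + 1/2)) (Polynomial.bernoulli (2*k)) : ℝ)| /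
          (2*(k:ℝ) * ‖((u:ℂ) + z)‖ ^ (2*k))
        ≤ (eta k * B) / (2*(k:ℝ) * (u^2 + c^2)^k) := by
          apply div_le_div₀ (by positivity) hnum (by positivity)
          exact mul_le_mul_of_nonneg_left hden (by positivity)
    _ = g u := by rw [hg]; field_simp
  -- step 1-2: norm of integral
  have step1 : ‖Rhatnext k z‖ ≤ ∫ u in Set.Ioi (0:ℝ), g u := by
    rw [Rhatnext, norm_neg]
    refine le_trans (norm_integral_le_integral_norm _) ?_
    apply integral_mono_of_nonneg (Filter.Eventually.of_forall fun u => norm_nonneg _) hgint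
    rw [Filter.EventuallyLE, ae_restrict_iff' measurableSet_Ioi]
    exact Filter.Eventually.of_forall hbound
  -- step 3: value of ∫ g
  have step3 : ∫ u in Set.Ioi (0:ℝ), g u
      = (eta k * B / (2*(k:ℝ))) * ((c^(2*k-1))⁻¹ *
          (Real.sqrt π * Real.Gamma ((k:ℝ) - 1/2) / (2 * Real.Gamma k))) := by
    rw [hg, integral_const_mul, Jscale k hk hc0]
  -- step 4: |That|
  have step4 : ‖That k z‖ = B / (2*(k:ℝ) * (2*(k:ℝ) - 1) * c^(2*k-1)) := by
    rw [That, norm_div, Complex.norm_real, Real.norm_eq_abs, haeval, norm_mul, norm_mul, norm_pow]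
    have h1 : ‖(2 * (k:ℂ))‖ = 2*(k:ℝ) := by
      rw [norm_mul]; simp [Complex.norm_natCast]
    have h2 : ‖(2 * (k:ℂ) - 1)‖ = 2*(k:ℝ) - 1 := by
      rw [show 2 * (k:ℂ) - 1 = ((2*(k:ℝ) - 1 : ℝ) : ℂ) by push_cast; ring,
        Complex.norm_real, Real.norm_eq_abs, abs_of_nonneg (by
          have hk1 : (1:ℝ) ≤ (k:ℝ) := (by exact_mod_cast hk); linarith)]
    rw [h1, h2, ← hc, ← hB]
  -- finish
  refine step1.trans ?_
  rw [step3, step4]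
  have hG : Real.Gamma ((k:ℝ) + 1/2) = ((k:ℝ) - 1/2) * Real.Gamma ((k:ℝ) - 1/2) := by
    rw [show (k:ℝ) + 1/2 = ((k:ℝ) - 1/2) + 1 by ring]
    exact Real.Gamma_add_one (by intro h; have hk1 : (1:ℝ) ≤ (k:ℝ) := (by exact_mod_cast hk); linarith)
  rw [hG]
  have hGk : (0:ℝ) < Real.Gamma (k:ℝ) := Real.Gamma_pos_of_pos hk0
  have hk1 : (1:ℝ) ≤ (k:ℝ) := by exact_mod_cast hk
  have h2k1 : (0:ℝ) < 2*(k:ℝ) - 1 := by linarith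
  have hcpow : (0:ℝ) < c^(2*k-1) := by positivity
  apply le_of_eq
  have n1 : (2*(k:ℝ)) ≠ 0 := by positivity
  have n2 : Real.Gamma (k:ℝ) ≠ 0 := hGk.ne'
  have n3 : (2*(k:ℝ) - 1) ≠ 0 := h2k1.ne'
  have n4 : c^(2*k-1) ≠ 0 := hcpow.ne'
  field_simp
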